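/- Let (ℒ_t)_{t≥0} be a family of linear maps on n×n complex matrices with ‖ℒ_t(x)‖₁ ≤ Λ ‖x‖₁ for all t and x, where Λ > 0, and let ε be a fixed matrix. Suppose x(t) and y(t) are differentiable matrix-valued functions satisfying ẋ(t) = ℒ_t(x(t)) + ε and ẏ(t) = ℒ_t(y(t)) with x(0) = y(0). Then for every c > 0 and every t ≤ c/Λ, ‖x(t) − y(t)‖₁ ≤ (e^c − 1) ‖ε‖₁ / Λ; equivalently, ‖x(t) − y(t)‖₁ ≤ (e^{Λt} − 1) ‖ε‖₁ / Λ for all t ≥ 0. -/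

import Mathlib

open MeasureTheory Matrix
open scoped ComplexOrder

noncomputable section

attribute [local instance] Matrix.frobeniusNormedAddCommGroup Matrix.frobeniusNormedSpace

/-- The removed Mathlib `Matrix.PosSemidef.sqrt`, with its old definition. -/
def posSemidefSqrtOld {n : ℕ} {M : Matrix (Fin n) (Fin n) ℂ} (hA : M.PosSemidef) :
    Matrix (Fin n) (Fin n) ℂ :=
  hA.isHermitian.eigenvectorUnitary.1 *
    diagonal ((↑) ∘ (fun r : ℝ => Real.sqrt r) ∘ hA.isHermitian.eigenvalues) *
    (star hA.isHermitian.eigenvectorUnitary : Matrix (Fin n) (Fin n) ℂ)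

/-- The trace norm `‖A‖₁ = Tr √(A†A)` of a complex matrix. -/
def traceNorm {n : ℕ} (A : Matrix (Fin n) (Fin n) ℂ) : ℝ :=
  (posSemidefSqrtOld (Matrix.posSemidef_conjTranspose_mul_self A)).trace.re


/-!
The trace norm is a norm on matrices: `‖A‖₁ = ∑ᵢ √λᵢ(Aᴴ A)` bounds `Re tr (Cᴴ A)` for every
contraction `C` (expand the trace in an eigenbasis of `Aᴴ A` and use Cauchy–Schwarz), with
equality for the partial isometry `C = A |A|⁺`, and this variational formula gives the triangle
inequality. On the finite-dimensional space of matrices all norms define the same topology, so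
`z = x - y` is differentiable for the trace norm, with `z(0) = 0` and
`‖ż‖₁ = ‖ℒ_t z + ε‖₁ ≤ Λ ‖z‖₁ + ‖ε‖₁`; Grönwall's inequality then gives
`‖z(t)‖₁ ≤ (e^{Λt} - 1) ‖ε‖₁ / Λ`, and `Λ t ≤ c` gives the first form.
-/

open scoped MatrixOrder InnerProductSpace

section DotProduct

variable {k m : Type*} [Fintype k] [Fintype m]

lemma re_star_dotProduct_le_norm_mul_norm (u v : m → ℂ) :
    (star u ⬝ᵥ v).re ≤ ‖WithLp.toLp 2 u‖ * ‖WithLp.toLp 2 v‖ := by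
  have h : star u ⬝ᵥ v = ⟪WithLp.toLp 2 u, WithLp.toLp 2 v⟫_ℂ := by
    rw [EuclideanSpace.inner_eq_star_dotProduct, dotProduct_comm]
  rw [h]
  exact (Complex.re_le_norm _).trans (norm_inner_le_norm _ _)

lemma norm_toLp_sq (v : m → ℂ) : ‖WithLp.toLp 2 v‖ ^ 2 = (star v ⬝ᵥ v).re := by
  rw [@norm_sq_eq_re_inner ℂ, EuclideanSpace.inner_eq_star_dotProduct, dotProduct_comm]
  rfl

lemma star_mulVec_dotProduct_mulVec (B C : Matrix k m ℂ) (v : m → ℂ) :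
    star (B *ᵥ v) ⬝ᵥ (C *ᵥ v) = star v ⬝ᵥ ((Bᴴ * C) *ᵥ v) := by
  rw [star_mulVec, dotProduct_mulVec, vecMul_vecMul, ← dotProduct_mulVec]

lemma norm_mulVec_sq (A : Matrix k m ℂ) (v : m → ℂ) :
    ‖WithLp.toLp 2 (A *ᵥ v)‖ ^ 2 = (star v ⬝ᵥ ((Aᴴ * A) *ᵥ v)).re := by
  rw [norm_toLp_sq, star_mulVec_dotProduct_mulVec]

lemma norm_mulVec_le_of_conjTranspose_mul_le_one [DecidableEq m] {C : Matrix k m ℂ}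
    (hC : Cᴴ * C ≤ 1) (v : m → ℂ) : ‖WithLp.toLp 2 (C *ᵥ v)‖ ≤ ‖WithLp.toLp 2 v‖ := by
  have h := (Complex.nonneg_iff.mp ((Matrix.le_iff.mp hC).dotProduct_mulVec_nonneg v)).1
  rw [sub_mulVec, one_mulVec, dotProduct_sub, Complex.sub_re, sub_nonneg] at h
  refine (pow_le_pow_iff_left₀ (norm_nonneg _) (norm_nonneg _) two_ne_zero).mp ?_
  rwa [norm_mulVec_sq, norm_toLp_sq]

lemma trace_eq_sum_star_dotProduct_mulVec [DecidableEq m]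
    (b : OrthonormalBasis m ℂ (EuclideanSpace ℂ m)) (M : Matrix m m ℂ) :
    M.trace = ∑ i, star ⇑(b i) ⬝ᵥ (M *ᵥ ⇑(b i)) := by
  rw [← M.trace_toLin_eq (PiLp.basisFun 2 ℂ m), LinearMap.trace_eq_sum_inner _ b]
  refine Finset.sum_congr rfl fun i _ => ?_
  rw [EuclideanSpace.inner_eq_star_dotProduct, dotProduct_comm]
  rfl

lemma norm_mulVec_eigenvectorBasis [DecidableEq m] (A : Matrix k m ℂ) (i : m) :
    ‖WithLp.toLp 2 (A *ᵥ ⇑((posSemidef_conjTranspose_mul_self A).1.eigenvectorBasis i))‖ =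
      √((posSemidef_conjTranspose_mul_self A).1.eigenvalues i) := by
  set hS := (posSemidef_conjTranspose_mul_self A).1
  rw [← Real.sqrt_sq (norm_nonneg _), norm_mulVec_sq, hS.mulVec_eigenvectorBasis, dotProduct_smul,
    Complex.real_smul, Complex.re_ofReal_mul, ← norm_toLp_sq, WithLp.toLp_ofLp,
    (hS.eigenvectorBasis).orthonormal.1 i, one_pow, mul_one]

end DotProduct

section TraceNorm

variable {n : ℕ}

lemma traceNorm_eq_sum_sqrt_eigenvalues (A : Matrix (Fin n) (Fin n) ℂ) :
    traceNorm A = ∑ i, √((posSemidef_conjTranspose_mul_self A).1.eigenvalues i) := by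
  rw [traceNorm, posSemidefSqrtOld, trace_mul_cycle, Unitary.coe_star_mul_self, one_mul,
    trace_diagonal, Complex.re_sum]
  simp

lemma traceNorm_nonneg (A : Matrix (Fin n) (Fin n) ℂ) : 0 ≤ traceNorm A := by
  rw [traceNorm_eq_sum_sqrt_eigenvalues]
  positivity

lemma traceNorm_eq_re_trace_cfc_sqrt (A : Matrix (Fin n) (Fin n) ℂ) :
    traceNorm A = (cfc Real.sqrt (Aᴴ * A)).trace.re := by
  rw [(posSemidef_conjTranspose_mul_self A).1.cfc_eq Real.sqrt, IsHermitian.cfc,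
    Unitary.conjStarAlgAut_apply]
  rfl

lemma traceNorm_smul (c : ℂ) (A : Matrix (Fin n) (Fin n) ℂ) :
    traceNorm (c • A) = ‖c‖ * traceNorm A := by
  have hS : IsSelfAdjoint (Aᴴ * A) := (posSemidef_conjTranspose_mul_self A).1
  have hM : (c • A)ᴴ * (c • A) = (‖c‖ ^ 2 : ℝ) • (Aᴴ * A) := by
    rw [conjTranspose_smul, Matrix.smul_mul, Matrix.mul_smul, smul_smul, ← Complex.coe_smul]
    congr 1
    rw [Complex.star_def, ← Complex.normSq_eq_conj_mul_self, Complex.normSq_eq_norm_sq]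
  have hsqrt : (fun x => √((‖c‖ ^ 2 : ℝ) • x)) = fun x => ‖c‖ * √x := by
    funext x
    rw [smul_eq_mul, Real.sqrt_mul (by positivity), Real.sqrt_sq (norm_nonneg _)]
  rw [traceNorm_eq_re_trace_cfc_sqrt, traceNorm_eq_re_trace_cfc_sqrt, hM,
    ← cfc_comp_smul (‖c‖ ^ 2 : ℝ) Real.sqrt (Aᴴ * A) (ha := hS),
    hsqrt, cfc_const_mul ‖c‖ Real.sqrt (Aᴴ * A), trace_smul, Complex.smul_re, smul_eq_mul]

lemma traceNorm_eq_zero_iff {A : Matrix (Fin n) (Fin n) ℂ} : traceNorm A = 0 ↔ A = 0 := by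
  refine ⟨fun h => ?_, fun h => by simpa [h] using traceNorm_smul 0 (0 : Matrix (Fin n) (Fin n) ℂ)⟩
  have hS := posSemidef_conjTranspose_mul_self A
  rw [traceNorm_eq_sum_sqrt_eigenvalues,
    Finset.sum_eq_zero_iff_of_nonneg fun _ _ => Real.sqrt_nonneg _] at h
  have hzero : hS.1.eigenvalues = 0 := funext fun i => by
    simpa [Real.sqrt_eq_zero (hS.eigenvalues_nonneg i)] using h i (Finset.mem_univ i)
  exact conjTranspose_mul_self_eq_zero.mp (hS.1.eigenvalues_eq_zero_iff.mp hzero)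

lemma re_trace_conjTranspose_mul_le_traceNorm {A C : Matrix (Fin n) (Fin n) ℂ}
    (hC : Cᴴ * C ≤ 1) : (Cᴴ * A).trace.re ≤ traceNorm A := by
  set b := (posSemidef_conjTranspose_mul_self A).1.eigenvectorBasis
  rw [trace_eq_sum_star_dotProduct_mulVec b, Complex.re_sum, traceNorm_eq_sum_sqrt_eigenvalues]
  refine Finset.sum_le_sum fun i _ => ?_
  rw [← star_mulVec_dotProduct_mulVec, ← norm_mulVec_eigenvectorBasis]
  calc _ ≤ ‖WithLp.toLp 2 (C *ᵥ b i)‖ * ‖WithLp.toLp 2 (A *ᵥ b i)‖ := re_star_dotProduct_le_norm_mul_norm _ _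
    _ ≤ 1 * ‖WithLp.toLp 2 (A *ᵥ b i)‖ := by
      gcongr
      exact (norm_mulVec_le_of_conjTranspose_mul_le_one hC _).trans_eq (b.orthonormal.1 i)
    _ = _ := one_mul _

lemma exists_conjTranspose_mul_le_one_and_re_trace_eq_traceNorm (A : Matrix (Fin n) (Fin n) ℂ) :
    ∃ C : Matrix (Fin n) (Fin n) ℂ, Cᴴ * C ≤ 1 ∧ (Cᴴ * A).trace.re = traceNorm A := by
  -- `C = A |A|⁺`, the partial isometry of the polar decomposition; as `(√0)⁻¹ = 0` in `ℝ`,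
  -- `P` below is the pseudo-inverse `|A|⁺` of `|A| = √(Aᴴ A)`.
  set S := Aᴴ * A
  have hS : 0 ≤ S := (posSemidef_conjTranspose_mul_self A).nonneg
  have hcont (f : ℝ → ℝ) : ContinuousOn f (spectrum ℝ S) := (spectrum ℝ S).toFinite.continuousOn f
  set P := cfc (fun x => (√x)⁻¹) S
  have hP : Pᴴ = P := (cfc_predicate _ S : IsSelfAdjoint P).star_eq
  have hPS : P * S = cfc Real.sqrt S := by
    conv_lhs => rw [← cfc_id' ℝ S]
    rw [← cfc_mul _ _ S (hcont _) (hcont _)]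
    exact cfc_congr fun x _ => by rw [inv_mul_eq_div, Real.div_sqrt]
  refine ⟨A * P, ?_, ?_⟩
  · rw [conjTranspose_mul, hP, Matrix.mul_assoc, ← Matrix.mul_assoc Aᴴ, ← Matrix.mul_assoc, hPS,
      ← cfc_mul _ _ S (hcont _) (hcont _)]
    refine cfc_le_one _ S fun x _ => ?_
    rcases eq_or_ne (√x) 0 with h | h
    · simp [h]
    · rw [mul_inv_cancel₀ h]
  · rw [conjTranspose_mul, hP, Matrix.mul_assoc, hPS, traceNorm_eq_re_trace_cfc_sqrt]

lemma traceNorm_add_le (A B : Matrix (Fin n) (Fin n) ℂ) :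
    traceNorm (A + B) ≤ traceNorm A + traceNorm B := by
  obtain ⟨C, hC, hCAB⟩ := exists_conjTranspose_mul_le_one_and_re_trace_eq_traceNorm (A + B)
  rw [← hCAB, Matrix.mul_add, trace_add, Complex.add_re]
  exact add_le_add (re_trace_conjTranspose_mul_le_traceNorm hC)
    (re_trace_conjTranspose_mul_le_traceNorm hC)

end TraceNorm

lemma HasDerivAt.linearMap_comp_of_finiteDimensional {𝕜 E F : Type*}
    [NontriviallyNormedField 𝕜] [CompleteSpace 𝕜] [NormedAddCommGroup E] [NormedSpace 𝕜 E]
    [NormedSpace ℝ E] [FiniteDimensional 𝕜 E] [NormedAddCommGroup F] [NormedSpace 𝕜 F]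
    [NormedSpace ℝ F] [LinearMap.CompatibleSMul E F ℝ 𝕜] {f : ℝ → E} {f' : E} {t : ℝ}
    (hf : HasDerivAt f f' t) (g : E →ₗ[𝕜] F) : HasDerivAt (fun s => g (f s)) (g f') t :=
  ((LinearMap.toContinuousLinearMap g).restrictScalars ℝ).hasFDerivAt.comp_hasDerivAt t hf

/-- `Matrix (Fin n) (Fin n) ℂ` already carries the Frobenius norm, so the trace norm lives on a
type synonym. -/
def TraceNormMatrix (n : ℕ) : Type := Matrix (Fin n) (Fin n) ℂ

namespace TraceNormMatrix

variable {n : ℕ}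

instance : AddCommGroup (TraceNormMatrix n) :=
  inferInstanceAs (AddCommGroup (Matrix (Fin n) (Fin n) ℂ))

instance : Module ℂ (TraceNormMatrix n) := inferInstanceAs (Module ℂ (Matrix (Fin n) (Fin n) ℂ))

instance : Norm (TraceNormMatrix n) := ⟨traceNorm (n := n)⟩

lemma normedSpaceCore : NormedSpace.Core ℂ (TraceNormMatrix n) where
  norm_nonneg := traceNorm_nonneg
  norm_smul := traceNorm_smul
  norm_triangle := traceNorm_add_le
  norm_eq_zero_iff _ := traceNorm_eq_zero_iff

instance : NormedAddCommGroup (TraceNormMatrix n) := .ofCore normedSpaceCore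

instance : NormedSpace ℂ (TraceNormMatrix n) := .ofCore normedSpaceCore

instance : FiniteDimensional ℂ (TraceNormMatrix n) :=
  inferInstanceAs (FiniteDimensional ℂ (Matrix (Fin n) (Fin n) ℂ))

def ofMatrix : Matrix (Fin n) (Fin n) ℂ ≃ₗ[ℂ] TraceNormMatrix n := LinearEquiv.refl ℂ _

lemma norm_ofMatrix (A : Matrix (Fin n) (Fin n) ℂ) : ‖ofMatrix A‖ = traceNorm A := rfl

end TraceNormMatrix

theorem norm_sub_le_gronwallBound_of_hasDerivAt {E : Type*} [NormedAddCommGroup E]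
    [NormedSpace ℝ E] {v : ℝ → E → E} {K : ℝ}
    (hv : ∀ t, 0 ≤ t → ∀ u w, ‖v t u - v t w‖ ≤ K * ‖u - w‖) {ε : E} {x y : ℝ → E}
    (hx : ∀ t, 0 ≤ t → HasDerivAt x (v t (x t) + ε) t)
    (hy : ∀ t, 0 ≤ t → HasDerivAt y (v t (y t)) t) (h0 : x 0 = y 0) {t : ℝ} (ht : 0 ≤ t) :
    ‖x t - y t‖ ≤ gronwallBound 0 K ‖ε‖ t := by
  have hderiv : ∀ s, 0 ≤ s → HasDerivAt (x - y) (v s (x s) + ε - v s (y s)) s :=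
    fun s hs => (hx s hs).sub (hy s hs)
  have bound : ∀ s ∈ Set.Ico 0 t, ‖v s (x s) + ε - v s (y s)‖ ≤ K * ‖(x - y) s‖ + ‖ε‖ :=
    fun s hs => calc
      _ ≤ ‖v s (x s) - v s (y s)‖ + ‖ε‖ := by rw [add_sub_right_comm]; exact norm_add_le _ _
      _ ≤ _ := by gcongr; exact hv s hs.1 _ _
  simpa using norm_le_gronwallBound_of_norm_deriv_right_le
    (fun s hs => (hderiv s hs.1).continuousAt.continuousWithinAt)
    (fun s hs => (hderiv s hs.1).hasDerivWithinAt) (by simp [h0]) bound t ⟨ht, le_rfl⟩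

/-- Mozgunov–Lidar perturbation lemma. If `‖ℒ_t x‖₁ ≤ Λ‖x‖₁`,
`ẋ = ℒ_t x + ε`, `ẏ = ℒ_t y`, and `x(0) = y(0)`, then for `c > 0` and `0 ≤ t ≤ c/Λ`,
`‖x(t) − y(t)‖₁ ≤ (e^c − 1)‖ε‖₁/Λ`; equivalently
`‖x(t) − y(t)‖₁ ≤ (e^{Λt} − 1)‖ε‖₁/Λ` for all `t ≥ 0`. -/
theorem mozgunov_lidar_perturbation
    {n : ℕ} (L : ℝ → Matrix (Fin n) (Fin n) ℂ →ₗ[ℂ] Matrix (Fin n) (Fin n) ℂ)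
    (Λ : ℝ) (hΛ : 0 < Λ)
    (hL : ∀ t, 0 ≤ t → ∀ x : Matrix (Fin n) (Fin n) ℂ, traceNorm (L t x) ≤ Λ * traceNorm x)
    (ε : Matrix (Fin n) (Fin n) ℂ)
    (x y : ℝ → Matrix (Fin n) (Fin n) ℂ)
    (hx : ∀ t, 0 ≤ t → HasDerivAt x (L t (x t) + ε) t)
    (hy : ∀ t, 0 ≤ t → HasDerivAt y (L t (y t)) t)
    (h0 : x 0 = y 0) :
    (∀ c : ℝ, 0 < c → ∀ t : ℝ, 0 ≤ t → t ≤ c / Λ →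
        traceNorm (x t - y t) ≤ (Real.exp c - 1) * traceNorm ε / Λ) ∧
      (∀ t : ℝ, 0 ≤ t →
        traceNorm (x t - y t) ≤ (Real.exp (Λ * t) - 1) * traceNorm ε / Λ) := by
  open TraceNormMatrix in
  have key (t : ℝ) (ht : 0 ≤ t) :
      traceNorm (x t - y t) ≤ (Real.exp (Λ * t) - 1) * traceNorm ε / Λ := by
    have h := norm_sub_le_gronwallBound_of_hasDerivAt
      (v := fun s u => ofMatrix (L s (ofMatrix.symm u))) (ε := ofMatrix ε)
      (x := fun s => ofMatrix (x s)) (y := fun s => ofMatrix (y s))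
      (fun s hs u w => by
        rw [← map_sub, ← map_sub, ← map_sub, norm_ofMatrix]
        exact hL s hs _)
      (fun s hs => by
        simpa using (hx s hs).linearMap_comp_of_finiteDimensional ofMatrix.toLinearMap)
      (fun s hs => by
        simpa using (hy s hs).linearMap_comp_of_finiteDimensional ofMatrix.toLinearMap)
      (congrArg ofMatrix h0) ht
    rw [← map_sub, norm_ofMatrix, norm_ofMatrix] at h
    calc _ ≤ gronwallBound 0 Λ (traceNorm ε) t := h
      _ = _ := by rw [gronwallBound_of_K_ne_0 hΛ.ne']; ring
  refine ⟨fun c _ t ht htc => (key t ht).trans ?_, key⟩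
  have hΛt : Λ * t ≤ c := by rwa [le_div_iff₀ hΛ, mul_comm] at htc
  gcongr
  exact traceNorm_nonneg ε
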